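/- Let s ∈ (0,1). Then: (i) u = (1 − √(1−s))/2 satisfies 1 − u = ( √((1−u)(1−s)) + √(u·s) )², i.e. −log(1−u) = r(u, s); and (ii) v = (1 + √s)/2 satisfies v = ( √((1−v)(1−s)) + √(v·s) )², i.e. −log(v) = r(s, v). -/

import Mathlib

/-- The uniform pairwise rate `r(p,q) = -2·log[√((1-p)(1-q)) + √(pq)]`. -/
noncomputable def uniRate (p q : ℝ) : ℝ :=
  -2 * Real.log (Real.sqrt ((1 - p) * (1 - q)) + Real.sqrt (p * q))

/-!
Write `t = √(1-s)`, so `s = (1-t)(1+t)` and `1 - u = (1+t)/2`. Then `(1-u)(1-s) = t²(1-u)` and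
`u·s = (1-t)²(1-u)`, so the two square roots are `t·√(1-u)` and `(1-t)·√(1-u)`, which add up to
`√(1-u)`. Replacing `(s, v)` by `(1 - s, 1 - v)` swaps the two square roots and turns part (ii)
into part (i) for `1 - s`.
-/

open Real

theorem sqrt_add_sqrt_eq_sqrt_one_sub {s u : ℝ} (hs0 : 0 ≤ s) (hs1 : s ≤ 1)
    (hu : u = (1 - √(1 - s)) / 2) :
    √((1 - u) * (1 - s)) + √(u * s) = √(1 - u) := by
  set t := √(1 - s)
  have ht_sq : t ^ 2 = 1 - s := sq_sqrt (by linarith)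
  have ht_le_one : t ≤ 1 := sqrt_le_one.mpr (by linarith)
  have hprod₁ : (1 - u) * (1 - s) = t ^ 2 * (1 - u) := by rw [ht_sq]; ring
  have hprod₂ : u * s = (1 - t) ^ 2 * (1 - u) := by
    rw [hu]; linear_combination ((1 - t) / 2) * ht_sq
  rw [hprod₁, hprod₂, sqrt_mul (sq_nonneg _), sqrt_mul (sq_nonneg _), sqrt_sq (sqrt_nonneg _),
    sqrt_sq (by linarith)]
  ring

theorem uniRate_eq_neg_log {p q x : ℝ} (hx : 0 ≤ x)
    (h : √((1 - p) * (1 - q)) + √(p * q) = √x) : uniRate p q = -log x := by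
  rw [uniRate, h, log_sqrt hx]
  ring

/-- **New boundary levels when doubling the number of levels.**
For `s ∈ (0,1)`: (i) `u = (1 - √(1-s))/2` satisfies
`1 - u = (√((1-u)(1-s)) + √(u·s))²`, i.e. `-log(1-u) = r(u,s)`; and
(ii) `v = (1 + √s)/2` satisfies `v = (√((1-v)(1-s)) + √(v·s))²`, i.e. `-log v = r(s,v)`. -/
theorem doubling_boundary_levels
    (s : ℝ) (hs0 : 0 < s) (hs1 : s < 1)
    (u v : ℝ)
    (hu : u = (1 - Real.sqrt (1 - s)) / 2)
    (hv : v = (1 + Real.sqrt s) / 2) :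
    ((1 - u = (Real.sqrt ((1 - u) * (1 - s)) + Real.sqrt (u * s)) ^ 2 ∧
        -Real.log (1 - u) = uniRate u s) ∧
      (v = (Real.sqrt ((1 - v) * (1 - s)) + Real.sqrt (v * s)) ^ 2 ∧
        -Real.log v = uniRate s v)) := by
  have hu_le_one : u ≤ 1 := by rw [hu]; linarith [sqrt_nonneg (1 - s)]
  have hv_nonneg : 0 ≤ v := by rw [hv]; linarith [sqrt_nonneg s]
  have hfirst := sqrt_add_sqrt_eq_sqrt_one_sub hs0.le hs1.le hu
  have hlast : √((1 - v) * (1 - s)) + √(v * s) = √v := by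
    have h := sqrt_add_sqrt_eq_sqrt_one_sub (s := 1 - s) (u := 1 - v) (by linarith) (by linarith)
      (by rw [hv, sub_sub_cancel]; ring)
    rwa [sub_sub_cancel, sub_sub_cancel, add_comm] at h
  refine ⟨⟨?_, (uniRate_eq_neg_log (by linarith) hfirst).symm⟩, ⟨?_, ?_⟩⟩
  · rw [hfirst, sq_sqrt (by linarith)]
  · rw [hlast, sq_sqrt hv_nonneg]
  · rw [uniRate_eq_neg_log hv_nonneg (by rwa [mul_comm (1 - s), mul_comm s])]
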